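/- Let K ⊆ [-1,1]^I be a compact space and let D ⊆ K ∩ c₀(I). Define τ_k : ℝ → ℝ by τ_k(t) = t + 1/k for t ≤ −1/k, τ_k(t) = 0 for |t| ≤ 1/k, and τ_k(t) = t − 1/k for t ≥ 1/k. Suppose for each k ∈ ℕ there is a decomposition I = ⋃_{n∈ℕ} Iₙ^{1/k} with the property that for x ∈ D and all n, {i ∈ Iₙ^{1/k} : |x(i)| > 1/k} is finite. Define Φ : K → [-1,1]^{I×ℕ} by Φ(x)(i,k) = (1/(nk)) τ_k(x(i)) for i ∈ Iₙ^{1/k}. Then Φ is continuous and injective (hence a homeomorphic embedding since K is compact). -/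
import Mathlib


/-- `c₀(I)`. -/
def c0Set (I : Type*) : Set (I → ℝ) :=
  {x | ∀ ε > 0, {i : I | ε < |x i|}.Finite}

/-- The truncation `τ_k`: `τ_k(t) = t + 1/k` for `t ≤ -1/k`, `0` for `|t| ≤ 1/k`,
`t - 1/k` for `t ≥ 1/k`. -/
noncomputable def tau (k : ℕ) (t : ℝ) : ℝ :=
  max (t - 1 / (k : ℝ)) 0 + min (t + 1 / (k : ℝ)) 0

lemma tau_lt {k : ℕ} (hk : 0 < 1 / (k : ℝ)) {a b : ℝ} (hab : a < b)
    (h : 1 / (k : ℝ) < max |a| |b|) : tau k a < tau k b := by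
  have h' : 1 / (k : ℝ) < a ∨ a < -(1 / (k : ℝ)) ∨ 1 / (k : ℝ) < b ∨ b < -(1 / (k : ℝ)) := by
    rcases lt_max_iff.mp h with h1 | h1
    · rcases lt_abs.mp h1 with h2 | h2
      · exact Or.inl h2
      · exact Or.inr (Or.inl (by linarith))
    · rcases lt_abs.mp h1 with h2 | h2
      · exact Or.inr (Or.inr (Or.inl h2))
      · exact Or.inr (Or.inr (Or.inr (by linarith)))
  unfold tau
  rcases le_total (a - 1 / (k : ℝ)) 0 with h1 | h1 <;>
    rcases le_total (a + 1 / (k : ℝ)) 0 with h2 | h2 <;>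
    rcases le_total (b - 1 / (k : ℝ)) 0 with h3 | h3 <;>
    rcases le_total (b + 1 / (k : ℝ)) 0 with h4 | h4 <;>
    simp only [max_eq_left, max_eq_right, min_eq_left, min_eq_right, *,
      max_eq_left_iff, max_eq_right_iff, min_eq_left_iff, min_eq_right_iff] <;>
    rcases h' with h5 | h5 | h5 | h5 <;> linarith

lemma tau_continuous (k : ℕ) : Continuous (tau k) := by
  unfold tau
  exact ((continuous_id.sub continuous_const).max continuous_const).add
    ((continuous_id.add continuous_const).min continuous_const)

theorem truncated_map_is_embedding
    {I : Type*} (K D : Set (I → ℝ))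
    (hK : IsCompact K)
    (hKcube : ∀ x ∈ K, ∀ i, x i ∈ Set.Icc (-1 : ℝ) 1)
    (hD : D ⊆ K ∩ c0Set I)
    (Ipart : ℕ → ℕ → Set I)
    (hcover : ∀ k ≥ 1, (⋃ n, Ipart k n) = Set.univ)
    (hfin : ∀ x ∈ D, ∀ k ≥ 1, ∀ n, {i ∈ Ipart k n | 1 / (k : ℝ) < |x i|}.Finite)
    (ν : ℕ → I → ℕ)
    (hν : ∀ k ≥ 1, ∀ i : I, 1 ≤ ν k i ∧ i ∈ Ipart k (ν k i)) :
    let Φ : (I → ℝ) → (I × ℕ → ℝ) := fun x p =>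
      (1 / ((ν p.2 p.1 : ℝ) * (p.2 : ℝ))) * tau p.2 (x p.1)
    ContinuousOn Φ K ∧ Set.InjOn Φ K ∧
      Topology.IsEmbedding (fun x : K => Φ x) := by
  intro Φ
  have hcont : Continuous Φ := by
    apply continuous_pi
    intro p
    exact continuous_const.mul ((tau_continuous p.2).comp (continuous_apply p.1))
  have hinj : Set.InjOn Φ K := by
    intro x hx y hy hxy
    funext i
    by_contra hne
    have hm : 0 < max |x i| |y i| := by
      by_contra hc
      push_neg at hc
      have h1 : x i = 0 := abs_nonpos_iff.mp (le_trans (le_max_left _ _) hc)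
      have h2 : y i = 0 := abs_nonpos_iff.mp (le_trans (le_max_right _ _) hc)
      exact hne (h1.trans h2.symm)
    obtain ⟨n, hn⟩ := exists_nat_one_div_lt hm
    set k : ℕ := n + 1 with hkdef
    have hk1 : 1 ≤ k := Nat.le_add_left 1 n
    have hkpos : 0 < 1 / (k : ℝ) := by
      apply div_pos one_pos
      exact_mod_cast Nat.succ_pos n
    have hnk : (1 : ℝ) / k < max |x i| |y i| := by
      have : ((n : ℝ) + 1) = (k : ℝ) := by push_cast [hkdef]; ring
      rwa [this] at hn
    have hνk := hν k hk1 i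
    have hc0 : (1 / ((ν k i : ℝ) * (k : ℝ))) ≠ 0 := by
      have h1 : (0 : ℝ) < (ν k i : ℝ) := by exact_mod_cast hνk.1
      have h2 : (0 : ℝ) < (k : ℝ) := by exact_mod_cast hk1
      positivity
    have key : tau k (x i) = tau k (y i) := by
      have := congrFun hxy (i, k)
      simpa [Φ] using mul_left_cancel₀ hc0 this
    rcases lt_or_gt_of_ne hne with h | h
    · exact absurd key (ne_of_lt (tau_lt hkpos h hnk))
    · exact absurd key.symm (ne_of_lt (tau_lt hkpos h (by rwa [max_comm])))
  refine ⟨hcont.continuousOn, hinj, ?_⟩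
  have : CompactSpace K := isCompact_iff_compactSpace.mp hK
  have hinj' : Function.Injective (fun x : K => Φ x) := by
    intro a b hab
    exact Subtype.ext (hinj a.2 b.2 hab)
  exact ((hcont.comp continuous_subtype_val).isClosedEmbedding hinj').isEmbedding
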